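/- Let μ > 0 and define R(X) = Σ_{i=1}^{N} f_μ(σ_i(X)). Then for every X ∈ ℝ^{m×n}, R(X) ≤ μ·rank(X), and equality holds if X has no singular value in the open interval (0, √μ), i.e. if every nonzero singular value of X is at least √μ. -/

import Mathlib

noncomputable section
open Matrix Real

theorem Matrix.isHermitian_transpose_mul_self {m n : Type*} [Fintype m]
    (A : Matrix m n ℝ) : (Aᵀ * A).IsHermitian := by
  simpa using Matrix.isHermitian_conjTranspose_mul_self A

/-- The singular values of a real `m × n` matrix, in descending order,
indexed by `Fin (min m n)`: square roots of the eigenvalues of `Xᴴ * X`. -/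
def sVal {m n : ℕ} (X : Matrix (Fin m) (Fin n) ℝ) (i : Fin (min m n)) : ℝ :=
  Real.sqrt ((Matrix.isHermitian_transpose_mul_self X).eigenvalues
    (Tuple.sort (fun j => -(Matrix.isHermitian_transpose_mul_self X).eigenvalues j)
      (Fin.castLE (Nat.min_le_right m n) i)))

def regR {m n : ℕ} (f : ℝ → ℝ) (X : Matrix (Fin m) (Fin n) ℝ) : ℝ :=
  ∑ i, f (sVal X i)

def colNormSq {m k : ℕ} (B : Matrix (Fin m) (Fin k) ℝ) (i : Fin k) : ℝ :=
  ∑ j, (B j i) ^ 2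

def colNorm {m k : ℕ} (B : Matrix (Fin m) (Fin k) ℝ) (i : Fin k) : ℝ :=
  Real.sqrt (colNormSq B i)

def Rt {m n k : ℕ} (f : ℝ → ℝ) (B : Matrix (Fin m) (Fin k) ℝ)
    (C : Matrix (Fin n) (Fin k) ℝ) : ℝ :=
  ∑ i, f ((colNormSq B i + colNormSq C i) / 2)

/-- Frobenius inner product `⟨X,Y⟩ = tr(XᵀY)`. -/
def frobInner {m n : ℕ} (X Y : Matrix (Fin m) (Fin n) ℝ) : ℝ :=
  (Xᵀ * Y).trace

def frobSq {m n : ℕ} (X : Matrix (Fin m) (Fin n) ℝ) : ℝ :=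
  (Xᵀ * X).trace

def fmu (μ x : ℝ) : ℝ := μ - max (Real.sqrt μ - x) 0 ^ 2

/-! `f_μ` vanishes at `0`, is bounded by `μ`, and equals `μ` on `[√μ, ∞)`. Hence `R(X)` is a sum of
terms `≤ μ` over the nonzero singular values only, with equality when these are all `≥ √μ`. Their
number is `rank X = rank XᵀX`, the number of nonzero eigenvalues of `XᵀX`; as those eigenvalues
are nonnegative and sorted decreasingly, the nonzero ones come first, so truncating to the first
`min m n` loses none of them. -/

open Finset

lemma Fin.val_lt_card_filter_of_downward_closed {N : ℕ} {P : Fin N → Prop} [DecidablePred P]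
    (hP : ∀ ⦃j k⦄, j ≤ k → P k → P j) {j : Fin N} (hj : P j) : (j : ℕ) < #{k | P k} := by
  have hsub : Iic j ⊆ ({k | P k} : Finset (Fin N)) := fun k hk =>
    mem_filter.2 ⟨mem_univ k, hP (mem_Iic.1 hk) hj⟩
  simpa using card_le_card hsub

lemma Fin.card_filter_castLE {N n : ℕ} (h : N ≤ n) {P : Fin n → Prop} [DecidablePred P]
    (hP : ∀ j, P j → (j : ℕ) < N) : #{i : Fin N | P (Fin.castLE h i)} = #{j | P j} := by
  refine card_nbij (Fin.castLE h) (fun i hi => by simpa using hi)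
    (fun _ _ _ _ hij => Fin.castLE_injective h hij) (fun j hj => ?_)
  have hj : P j := (mem_filter.1 hj).2
  exact ⟨⟨j, hP j hj⟩, by simpa using hj, rfl⟩

def sortedGramEigenvalues {m n : ℕ} (X : Matrix (Fin m) (Fin n) ℝ) : Fin n → ℝ :=
  (isHermitian_transpose_mul_self X).eigenvalues ∘
    Tuple.sort (fun j => -(isHermitian_transpose_mul_self X).eigenvalues j)

section SortedGramEigenvalues

variable {m n : ℕ} (X : Matrix (Fin m) (Fin n) ℝ)

lemma sortedGramEigenvalues_nonneg (j : Fin n) : 0 ≤ sortedGramEigenvalues X j :=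
  eigenvalues_conjTranspose_mul_self_nonneg X _

lemma sortedGramEigenvalues_antitone : Antitone (sortedGramEigenvalues X) := fun _ _ hjk =>
  neg_le_neg_iff.mp
    (Tuple.monotone_sort (fun j => -(isHermitian_transpose_mul_self X).eigenvalues j) hjk)

lemma card_sortedGramEigenvalues_ne_zero :
    #{j | sortedGramEigenvalues X j ≠ 0} = X.rank := by
  rw [← rank_transpose_mul_self, (isHermitian_transpose_mul_self X).rank_eq_card_non_zero_eigs,
    ← Fintype.card_subtype]
  exact Fintype.card_congr (Equiv.subtypeEquiv _ fun _ => Iff.rfl)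

lemma sortedGramEigenvalues_eq_zero_of_rank_le {j : Fin n} (hj : X.rank ≤ j) :
    sortedGramEigenvalues X j = 0 := by
  by_contra hne
  refine (Fin.val_lt_card_filter_of_downward_closed
    (P := fun j => sortedGramEigenvalues X j ≠ 0) (fun j k hjk hk => ?_) hne).not_ge ?_
  · exact ((sortedGramEigenvalues_nonneg X k).lt_of_ne' hk |>.trans_le
      (sortedGramEigenvalues_antitone X hjk)).ne'
  · rwa [card_sortedGramEigenvalues_ne_zero]

end SortedGramEigenvalues

lemma sVal_eq_sqrt_sortedGramEigenvalues {m n : ℕ} (X : Matrix (Fin m) (Fin n) ℝ)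
    (i : Fin (min m n)) :
    sVal X i = √(sortedGramEigenvalues X (Fin.castLE (Nat.min_le_right m n) i)) := rfl

lemma card_sVal_ne_zero {m n : ℕ} (X : Matrix (Fin m) (Fin n) ℝ) :
    #{i | sVal X i ≠ 0} = X.rank := by
  have hrank : X.rank ≤ min m n :=
    le_min (by simpa using X.rank_le_card_height) (by simpa using X.rank_le_card_width)
  simp_rw [sVal_eq_sqrt_sortedGramEigenvalues,
    Real.sqrt_ne_zero (sortedGramEigenvalues_nonneg X _)]
  rw [Fin.card_filter_castLE (P := fun j => sortedGramEigenvalues X j ≠ 0) _ fun j hj => ?_,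
    card_sortedGramEigenvalues_ne_zero]
  by_contra hlt
  exact hj (sortedGramEigenvalues_eq_zero_of_rank_le X (by omega))

lemma regR_eq_sum_filter_sVal_ne_zero {m n : ℕ} {f : ℝ → ℝ} (hf : f 0 = 0)
    (X : Matrix (Fin m) (Fin n) ℝ) : regR f X = ∑ i with sVal X i ≠ 0, f (sVal X i) :=
  (sum_filter_of_ne (p := fun i => sVal X i ≠ 0) fun i _ hfi h0 => hfi (by rw [h0, hf])).symm

lemma fmu_le (μ x : ℝ) : fmu μ x ≤ μ := sub_le_self μ (sq_nonneg _)

lemma fmu_zero {μ : ℝ} (hμ : 0 ≤ μ) : fmu μ 0 = 0 := by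
  simp [fmu, Real.sq_sqrt hμ]

lemma fmu_of_sqrt_le {μ x : ℝ} (hx : √μ ≤ x) : fmu μ x = μ := by
  simp [fmu, hx]

/-- For `μ > 0`, `R(X) = Σᵢ f_μ(σᵢ(X)) ≤ μ · rank X`, with equality if
`X` has no singular value in the open interval `(0, √μ)`. -/
theorem regR_le_mu_rank {m n : ℕ} (μ : ℝ) (hμ : 0 < μ) (X : Matrix (Fin m) (Fin n) ℝ) :
    regR (fmu μ) X ≤ μ * X.rank ∧
    ((∀ i, sVal X i ∉ Set.Ioo 0 (Real.sqrt μ)) → regR (fmu μ) X = μ * X.rank) := by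
  have hsum_const : ∑ _i ∈ {i | sVal X i ≠ 0}, μ = μ * X.rank := by
    rw [sum_const, card_sVal_ne_zero, nsmul_eq_mul, mul_comm]
  rw [regR_eq_sum_filter_sVal_ne_zero (fmu_zero hμ.le), ← hsum_const]
  refine ⟨sum_le_sum fun i _ => fmu_le μ _, fun hgap => sum_congr rfl fun i hi => ?_⟩
  have hpos : 0 < sVal X i := (Real.sqrt_nonneg _).lt_of_ne' (mem_filter.1 hi).2
  exact fmu_of_sqrt_le (not_lt.1 fun hlt => hgap i ⟨hpos, hlt⟩)
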